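/- arXiv:2012.01995 — 3 statements merged into one kernel-verified Lean document; each statement's English description precedes it below -/
import Mathlib

section
/- For every n ≥ 1, the multicritical parameters θ_i = (-1)^{i+1} (n-1)! (n+1)! / ((n-i)! (n+i)!) for i = 1,...,n satisfy the moment condition: the sum over i = 1,...,n of i^{2k} θ_i equals (n+1)/(2n) when k = 0, and equals 0 for every k with 1 ≤ k ≤ n-1. -/
/-!
Since `(n-1)! (n+1)! / ((n-i)! (n+i)!) = (n+1)/n · C(2n, n+i) / C(2n, n)`, the moments are, up to
the factor `(n+1)/(n C(2n,n))`, the sums `∑ (-1)^(i+1) C(2n, n+i) i^(2k)`. The `2n`-th forward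
difference of `x ↦ x^(2k)` at `-n` vanishes for `k < n`, i.e.
`∑_{j=0}^{2n} (-1)^j C(2n, j) (j - n)^(2k) = 0`; the terms `j = n ± i` agree, so twice the
moment sum equals the central term `C(2n, n) 0^(2k)`.
-/

open Finset Nat

theorem sum_range_alternating_choose_mul_add_pow_eq_zero {R : Type*} [CommRing R] {j m : ℕ}
    (h : j < m) (y : R) :
    ∑ i ∈ range (m + 1), (-1 : R) ^ i * m.choose i * (y + i) ^ j = 0 := by
  have hΔ := congr_fun (fwdDiff_iter_pow_eq_zero_of_lt (R := R) h) y
  rw [fwdDiff_iter_eq_sum_shift, Pi.zero_apply] at hΔ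
  calc _ = (-1 : R) ^ m * ∑ i ∈ range (m + 1),
        ((-1 : ℤ) ^ (m - i) * m.choose i) • (y + i • (1 : R)) ^ j := by
        rw [mul_sum]
        refine sum_congr rfl fun i hi => ?_
        have hsign : (-1 : R) ^ m * (-1) ^ (m - i) = (-1) ^ i := by
          rw [← pow_add, show m + (m - i) = i + 2 * (m - i) by grind, pow_add, pow_mul]
          simp
        simp only [zsmul_eq_mul, nsmul_eq_mul, mul_one, Int.cast_mul, Int.cast_pow, Int.cast_neg,
          Int.cast_one, Int.cast_natCast, ← hsign]
        ring
    _ = 0 := by rw [hΔ, mul_zero]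

theorem sum_range_two_mul_add_one_eq_add_sum_Icc {M : Type*} [AddCommMonoid M] (f : ℕ → M)
    (n : ℕ) :
    ∑ j ∈ range (2 * n + 1), f j = f n + ∑ i ∈ Icc 1 n, (f (n - i) + f (n + i)) := by
  induction n generalizing f with
  | zero => simp
  | succ n ih =>
    rw [show 2 * (n + 1) + 1 = 2 * n + 1 + 1 + 1 by ring, sum_range_succ, sum_range_succ', ih,
      sum_Icc_succ_top (by omega)]
    have hterms : ∀ i ∈ Icc 1 n, f (n - i + 1) + f (n + i + 1) = f (n + 1 - i) + f (n + 1 + i) :=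
      fun i hi => by rw [mem_Icc] at hi; rw [show n - i + 1 = n + 1 - i by omega, add_right_comm]
    rw [sum_congr rfl hterms, Nat.sub_self, show n + 1 + (n + 1) = 2 * n + 2 by ring]
    abel

theorem two_mul_sum_Icc_alternating_choose_mul_even_pow_eq {R : Type*} [CommRing R] {k n : ℕ}
    (hk : k < n) :
    2 * ∑ i ∈ Icc 1 n, (-1 : R) ^ (i + 1) * (2 * n).choose (n + i) * (i : R) ^ (2 * k) =
      (2 * n).choose n * 0 ^ (2 * k) := by
  have h := sum_range_alternating_choose_mul_add_pow_eq_zero (show 2 * k < 2 * n by omega)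
    (-(n : R))
  rw [sum_range_two_mul_add_one_eq_add_sum_Icc] at h
  have hpair : ∀ i ∈ Icc 1 n,
      (-1 : R) ^ (n - i) * (2 * n).choose (n - i) * (-(n : R) + (n - i : ℕ)) ^ (2 * k) +
        (-1 : R) ^ (n + i) * (2 * n).choose (n + i) * (-(n : R) + (n + i : ℕ)) ^ (2 * k) =
      (-1) ^ n * -(2 * ((-1 : R) ^ (i + 1) * (2 * n).choose (n + i) * (i : R) ^ (2 * k))) := by
    intro i hi
    have hin : i ≤ n := (mem_Icc.mp hi).2
    have hsign : (-1 : R) ^ (n - i) = (-1) ^ (n + i) := by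
      rw [show n + i = n - i + 2 * i by omega, pow_add, pow_mul]; simp
    rw [hsign, Nat.choose_symm_of_eq_add (show 2 * n = (n - i) + (n + i) by omega),
      Nat.cast_sub hin, Nat.cast_add, show -(n : R) + (n - i) = -i by ring,
      show -(n : R) + (n + i) = i by ring, Even.neg_pow (even_two_mul k)]
    ring
  rw [sum_congr rfl hpair, ← mul_sum, sum_neg_distrib, ← mul_sum, neg_add_cancel, mul_assoc,
    ← mul_add, (isUnit_neg_one.pow n).mul_right_eq_zero] at h
  linear_combination -h

theorem factorial_pred_mul_factorial_succ_div_eq_choose {K : Type*} [Field K] [CharZero K]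
    {n i : ℕ} (hn : 1 ≤ n) (hi : i ≤ n) :
    ((n - 1)! * (n + 1)! : K) / ((n - i)! * (n + i)!) =
      (n + 1) / n / (2 * n).choose n * (2 * n).choose (n + i) := by
  have hn0 : (n : K) ≠ 0 := by exact_mod_cast (show n ≠ 0 by omega)
  rw [Nat.cast_choose K (show n ≤ 2 * n by omega), Nat.cast_choose K (show n + i ≤ 2 * n by omega),
    show 2 * n - n = n by omega, show 2 * n - (n + i) = n - i by omega, factorial_succ,
    ← Nat.mul_factorial_pred (show n ≠ 0 by omega)]
  have hfac : ((2 * n)! : K) ≠ 0 := Nat.cast_ne_zero.mpr (factorial_ne_zero _)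
  push_cast
  field_simp

/-- the odd-even multicritical parameters
`θ_i = (-1)^(i+1) (n-1)! (n+1)! / ((n-i)! (n+i)!)` for `i = 1,…,n` satisfy the moment
conditions `∑ θ_i = (n+1)/(2n)` and `∑ i^(2k) θ_i = 0` for `1 ≤ k ≤ n-1`. -/
theorem multicritical_oe_moments (n : ℕ) (hn : 1 ≤ n)
    (θ : ℕ → ℝ)
    (hθ : ∀ i, 1 ≤ i → i ≤ n →
      θ i = (-1 : ℝ) ^ (i + 1) * ((n - 1).factorial : ℝ) * ((n + 1).factorial : ℝ) /
        (((n - i).factorial : ℝ) * ((n + i).factorial : ℝ))) :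
    (∑ i ∈ Finset.Icc 1 n, θ i = (n + 1) / (2 * n)) ∧
    (∀ k : ℕ, 1 ≤ k → k ≤ n - 1 →
      ∑ i ∈ Finset.Icc 1 n, (i : ℝ) ^ (2 * k) * θ i = 0) := by
  have hθ_choose : ∀ i ∈ Icc 1 n,
      θ i = (n + 1) / n / (2 * n).choose n * ((-1 : ℝ) ^ (i + 1) * (2 * n).choose (n + i)) := by
    intro i hi
    rw [mem_Icc] at hi
    rw [hθ i hi.1 hi.2, mul_assoc, mul_div_assoc,
      factorial_pred_mul_factorial_succ_div_eq_choose hn hi.2]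
    ring
  have hmoment : ∀ k ≤ n - 1,
      ∑ i ∈ Icc 1 n, (i : ℝ) ^ (2 * k) * θ i = (n + 1) / (2 * n) * 0 ^ (2 * k) := by
    intro k hk
    have hC : ((2 * n).choose n : ℝ) ≠ 0 := Nat.cast_ne_zero.mpr (Nat.choose_pos (by omega)).ne'
    have hn0 : (n : ℝ) ≠ 0 := Nat.cast_ne_zero.mpr (by omega)
    calc ∑ i ∈ Icc 1 n, (i : ℝ) ^ (2 * k) * θ i
        = (n + 1) / n / (2 * n).choose n *
            ∑ i ∈ Icc 1 n, (-1 : ℝ) ^ (i + 1) * (2 * n).choose (n + i) * (i : ℝ) ^ (2 * k) := by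
          rw [mul_sum]
          exact sum_congr rfl fun i hi => by rw [hθ_choose i hi]; ring
      _ = (n + 1) / n / (2 * n).choose n * ((2 * n).choose n * 0 ^ (2 * k) / 2) := by
          rw [← two_mul_sum_Icc_alternating_choose_mul_even_pow_eq (by omega)]; ring
      _ = (n + 1) / (2 * n) * 0 ^ (2 * k) := by field_simp
  refine ⟨by simpa using hmoment 0 (by omega), fun k hk1 hk2 => ?_⟩
  rw [hmoment k hk2, zero_pow (by omega), mul_zero]
end

section
/- For every n ≥ 1, the odd multicritical parameters θ_{2i-1} = (-1)^{i+1} (n-1)! n! / ((2i-1) (n-i)! (n+i-1)!) for i = 1,...,n satisfy: ∑_{i=1}^n (2i-1)^{2k} θ_{2i-1} = 0 for all 1 ≤ k ≤ n-1, and ∑_{i=1}^n θ_{2i-1} = 2^{4n-2} / (n · C(2n,n)^2), where C(2n,n) is the central binomial coefficient. -/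
open scoped BigOperators

/-!
Write `x_i = (2i-1)^2`. Since `(2i-1)^2 - (2j-1)^2 = 4(i-j)(i+j-1)`, the product
`∏_{j ≠ i} (x_i - x_j)` is an explicit ratio of factorials, and this identifies
`θ_{2i-1} = K / (x_i ∏_{j ≠ i} (x_i - x_j))` with `K = (-1)^(n+1) 4^(n-1) (n-1)! n!`.
The moment identities are then the vanishing of the coefficient of `X^(n-1)` in the Lagrange
interpolant of `X^(k-1)`, and `∑ θ_{2i-1}` is `-K` times the partial fraction expansion of
`1 / ∏ (x - x_i)` at `x = 0`. Indices are shifted to `i ∈ range n` (nodes `(2i+1)^2`) to avoid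
truncated subtraction.
-/

open Finset Polynomial
open scoped Nat

namespace Lagrange

variable {F ι : Type*} [Field F] [DecidableEq ι] {s : Finset ι} {v : ι → F}

theorem sum_pow_div_prod_sub_eq_zero (hvs : Set.InjOn v s) {m : ℕ} (hm : m + 1 < #s) :
    ∑ i ∈ s, v i ^ m / ∏ j ∈ s.erase i, (v i - v j) = 0 := by
  have hdeg : (X ^ m : F[X]).degree < #s := by
    rw [degree_X_pow]; exact_mod_cast (by omega : m < #s)
  simpa [coeff_X_pow, show #s - 1 ≠ m by omega] using (coeff_eq_sum hvs hdeg).symm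

theorem inv_prod_sub_eq_sum (hvs : Set.InjOn v s) (hs : s.Nonempty) {x : F}
    (hx : ∀ i ∈ s, x ≠ v i) :
    (∏ i ∈ s, (x - v i))⁻¹ = ∑ i ∈ s, ((x - v i) * ∏ j ∈ s.erase i, (v i - v j))⁻¹ := by
  have h := eval_interpolate_not_at_node (s := s) (v := v) 1 hx
  rw [interpolate_one hvs hs, eval_one, eval_nodal] at h
  simp only [nodalWeight, Pi.one_apply, mul_one, prod_inv_distrib] at h
  rw [← eq_inv_of_mul_eq_one_right h.symm]
  exact sum_congr rfl fun i _ => by rw [mul_inv, mul_comm]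

end Lagrange

theorem prod_range_erase_natCast_sub {R : Type*} [CommRing R] {n i : ℕ} (hi : i < n) :
    ∏ j ∈ (range n).erase i, ((i : R) - j) = (-1) ^ (n - 1 - i) * i ! * (n - 1 - i)! := by
  have hsplit : (range n).erase i = range i ∪ Ico (i + 1) n := by
    ext j; simp only [mem_erase, mem_range, mem_union, mem_Ico]; omega
  have hdisj : Disjoint (range i) (Ico (i + 1) n) := by
    rw [disjoint_left]; intro j hj hj'; simp only [mem_range, mem_Ico] at hj hj'; omega
  have hlow : ∏ j ∈ range i, ((i : R) - j) = i ! := by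
    rw [← Nat.descFactorial_self, Nat.descFactorial_eq_prod_range, Nat.cast_prod]
    exact prod_congr rfl fun j hj => by rw [Nat.cast_sub (mem_range.1 hj).le]
  have hhigh : ∏ j ∈ Ico (i + 1) n, ((i : R) - j) = (-1) ^ (n - 1 - i) * (n - 1 - i)! := by
    rw [prod_Ico_eq_prod_range, show n - (i + 1) = n - 1 - i by omega]
    calc ∏ k ∈ range (n - 1 - i), ((i : R) - (i + 1 + k : ℕ))
        = ∏ k ∈ range (n - 1 - i), (-1 * ((k + 1 : ℕ) : R)) :=
          prod_congr rfl fun k _ => by push_cast; ring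
      _ = (-1) ^ (n - 1 - i) * (n - 1 - i)! := by
          rw [prod_mul_distrib, prod_const, card_range, ← Nat.cast_prod,
            prod_range_add_one_eq_factorial]
  rw [hsplit, prod_union hdisj, hlow, hhigh]
  ring

theorem factorial_mul_prod_range_add_add_one (i n : ℕ) :
    i ! * ∏ j ∈ range n, (i + j + 1) = (i + n)! := by
  rw [← Nat.factorial_mul_ascFactorial, Nat.ascFactorial_eq_prod_range]
  congr 1
  exact prod_congr rfl fun j _ => by ring

theorem two_pow_mul_factorial_mul_prod_odd (n : ℕ) :
    2 ^ n * n ! * ∏ i ∈ range n, (2 * i + 1) = (2 * n)! := by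
  induction n with
  | zero => simp
  | succ n ih =>
    rw [prod_range_succ, Nat.factorial_succ n, show 2 * (n + 1) = 2 * n + 1 + 1 by ring,
      Nat.factorial_succ (2 * n + 1), Nat.factorial_succ (2 * n), ← ih]
    ring

theorem choose_mul_factorial_eq_two_pow_mul_prod_odd (n : ℕ) :
    (2 * n).choose n * n ! = 2 ^ n * ∏ i ∈ range n, (2 * i + 1) := by
  apply Nat.eq_of_mul_eq_mul_right n.factorial_pos
  have h := Nat.choose_mul_factorial_mul_factorial (show n ≤ 2 * n by omega)
  rw [show 2 * n - n = n by omega] at h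
  rw [h, ← two_pow_mul_factorial_mul_prod_odd]
  ring

theorem odd_mul_prod_erase_odd_sq_sub {n i : ℕ} (hi : i < n) :
    (2 * i + 1 : ℝ) * ∏ j ∈ (range n).erase i, ((2 * i + 1 : ℝ) ^ 2 - (2 * j + 1) ^ 2)
      = (-1) ^ (n - 1 - i) * 4 ^ (n - 1) * (n - 1 - i)! * (n + i)! := by
  have hi' : i ∈ range n := mem_range.2 hi
  have hfactor : ∀ j ∈ (range n).erase i,
      (2 * i + 1 : ℝ) ^ 2 - (2 * j + 1) ^ 2 = 4 * (((i : ℝ) - j) * (i + j + 1)) :=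
    fun j _ => by ring
  have hfull : (2 * i + 1 : ℝ) * ∏ j ∈ (range n).erase i, ((i : ℝ) + j + 1)
      = ∏ j ∈ range n, ((i : ℝ) + j + 1) := by
    rw [← mul_prod_erase _ _ hi']; ring
  have hfact : (i ! : ℝ) * ∏ j ∈ range n, ((i : ℝ) + j + 1) = (n + i)! := by
    rw [add_comm n]; exact_mod_cast factorial_mul_prod_range_add_add_one i n
  rw [prod_congr rfl hfactor, prod_mul_distrib, prod_mul_distrib, prod_const,
    card_erase_of_mem hi', card_range, prod_range_erase_natCast_sub hi]
  linear_combination ((-1) ^ (n - 1 - i) * 4 ^ (n - 1) * ((n - 1 - i)! : ℝ)) *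
    ((i ! : ℝ) * hfull + hfact)

noncomputable def oddSqWeight (n i : ℕ) : ℝ :=
  ((2 * i + 1 : ℝ) ^ 2 * ∏ j ∈ (range n).erase i, ((2 * i + 1 : ℝ) ^ 2 - (2 * j + 1) ^ 2))⁻¹

theorem injective_odd_sq : Function.Injective fun j : ℕ => (2 * j + 1 : ℝ) ^ 2 := by
  intro a b hab
  have h : (2 * a + 1) ^ 2 = (2 * b + 1) ^ 2 := by
    exact_mod_cast (show (2 * a + 1 : ℝ) ^ 2 = (2 * b + 1) ^ 2 from hab)
  have := Nat.pow_left_injective two_ne_zero h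
  omega

theorem sum_odd_pow_mul_oddSqWeight {n k : ℕ} (hk : 1 ≤ k) (hkn : k + 1 ≤ n) :
    ∑ i ∈ range n, (2 * i + 1 : ℝ) ^ (2 * k) * oddSqWeight n i = 0 := by
  rw [← Lagrange.sum_pow_div_prod_sub_eq_zero injective_odd_sq.injOn
    (show k - 1 + 1 < #(range n) by rw [card_range]; omega)]
  refine sum_congr rfl fun i _ => ?_
  have hpow : (2 * i + 1 : ℝ) ^ (2 * k) = ((2 * i + 1 : ℝ) ^ 2) ^ (k - 1) * (2 * i + 1) ^ 2 := by
    rw [← pow_succ, Nat.sub_add_cancel hk, ← pow_mul]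
  rw [oddSqWeight, hpow, mul_inv, div_eq_mul_inv]
  field_simp

theorem sum_oddSqWeight {n : ℕ} (hn : 1 ≤ n) :
    ∑ i ∈ range n, oddSqWeight n i = (-1) ^ (n + 1) / (∏ i ∈ range n, (2 * i + 1 : ℝ)) ^ 2 := by
  have h := Lagrange.inv_prod_sub_eq_sum injective_odd_sq.injOn
    (nonempty_range_iff.2 (by omega : n ≠ 0)) (x := 0)
    (fun i _ => (by positivity : (0 : ℝ) < (2 * i + 1) ^ 2).ne)
  rw [prod_congr rfl fun (i : ℕ) _ =>
      show (0 : ℝ) - (2 * i + 1) ^ 2 = -1 * (2 * i + 1 : ℝ) ^ 2 by ring, prod_mul_distrib, prod_const, card_range, prod_pow] at h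
  have hweight : ∀ i ∈ range n, oddSqWeight n i = -((0 - (2 * i + 1 : ℝ) ^ 2) *
      ∏ j ∈ (range n).erase i, ((2 * i + 1 : ℝ) ^ 2 - (2 * j + 1) ^ 2))⁻¹ := fun i _ => by
    rw [oddSqWeight, zero_sub, neg_mul, inv_neg, neg_neg]
  rw [sum_congr rfl hweight, sum_neg_distrib, ← h]
  field_simp
  rw [← pow_add, Odd.neg_one_pow ⟨n, by ring⟩]

theorem neg_one_pow_mul_div_eq_mul_oddSqWeight {n i : ℕ} (hi : i < n) (a b : ℝ) :
    (-1 : ℝ) ^ (i + 1 + 1) * a * b / ((2 * i + 1) * (n - 1 - i)! * (n + i)!)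
      = (-1) ^ (n + 1) * 4 ^ (n - 1) * a * b * oddSqWeight n i := by
  rw [oddSqWeight, show ∀ P : ℝ, (2 * i + 1 : ℝ) ^ 2 * P = (2 * i + 1) * ((2 * i + 1) * P) from
      fun P => by ring, odd_mul_prod_erase_odd_sq_sub hi,
    show n + 1 = i + 1 + 1 + (n - 1 - i) by omega]
  field_simp
  ring

theorem sum_Icc_odd_eq_sum_range {M : Type*} [AddCommMonoid M] (f : ℕ → M) (n : ℕ) :
    ∑ i ∈ Icc 1 n, f (2 * i - 1) = ∑ i ∈ range n, f (2 * i + 1) := by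
  rw [← Finset.Ico_add_one_right_eq_Icc, sum_Ico_eq_sum_range, Nat.add_sub_cancel]
  exact sum_congr rfl fun i _ => by congr 1; omega

theorem four_pow_mul_factorial_div_prod_odd_sq {n : ℕ} (hn : 1 ≤ n) :
    (4 : ℝ) ^ (n - 1) * (n - 1)! * n ! / (∏ i ∈ range n, (2 * i + 1 : ℝ)) ^ 2
      = 2 ^ (4 * n - 2) / (n * ((2 * n).choose n) ^ 2) := by
  have hchoose : ((2 * n).choose n : ℝ) * n ! = 2 ^ n * ∏ i ∈ range n, (2 * i + 1 : ℝ) := by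
    exact_mod_cast choose_mul_factorial_eq_two_pow_mul_prod_odd n
  have hfact : (n : ℝ) * (n - 1)! = n ! := by exact_mod_cast Nat.mul_factorial_pred (by omega)
  have hpow : (2 : ℝ) ^ (4 * n - 2) = 4 ^ (n - 1) * (2 ^ n) ^ 2 := by
    rw [show (4 : ℝ) = 2 ^ 2 by norm_num, ← pow_mul, ← pow_mul, ← pow_add]
    congr 1; omega
  have hprod : ∏ i ∈ range n, (2 * i + 1 : ℝ) ≠ 0 := prod_ne_zero_iff.2 fun i _ => by positivity
  have hn0 : (n : ℝ) ≠ 0 := by positivity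
  have hc0 : ((2 * n).choose n : ℝ) ≠ 0 := by exact_mod_cast (Nat.choose_pos (by omega)).ne'
  rw [div_eq_div_iff (by positivity) (by positivity), hpow]
  linear_combination (4 : ℝ) ^ (n - 1) * (n ! * ((2 * n).choose n : ℝ) ^ 2) * hfact +
    (4 : ℝ) ^ (n - 1) * ((2 * n).choose n * n ! + 2 ^ n * ∏ i ∈ range n, (2 * i + 1 : ℝ)) * hchoose

/-- the odd multicritical parameters
`θ_{2i-1} = (-1)^(i+1) (n-1)! n! / ((2i-1) (n-i)! (n+i-1)!)` for `i = 1,…,n` satisfy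
`∑ (2i-1)^(2k) θ_{2i-1} = 0` for `1 ≤ k ≤ n-1` and
`∑ θ_{2i-1} = 2^(4n-2) / (n ⬝ C(2n,n)^2)`. -/
theorem multicritical_o_moments (n : ℕ) (hn : 1 ≤ n)
    (θ : ℕ → ℝ)
    (hθ : ∀ i, 1 ≤ i → i ≤ n →
      θ (2 * i - 1) = (-1 : ℝ) ^ (i + 1) * ((n - 1).factorial : ℝ) * (n.factorial : ℝ) /
        (((2 * i - 1 : ℕ) : ℝ) * ((n - i).factorial : ℝ) * ((n + i - 1).factorial : ℝ))) :
    (∀ k : ℕ, 1 ≤ k → k ≤ n - 1 →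
      ∑ i ∈ Finset.Icc 1 n, ((2 * i - 1 : ℕ) : ℝ) ^ (2 * k) * θ (2 * i - 1) = 0) ∧
    (∑ i ∈ Finset.Icc 1 n, θ (2 * i - 1)
      = 2 ^ (4 * n - 2) / ((n : ℝ) * ((Nat.choose (2 * n) n : ℝ)) ^ 2)) := by
  set K : ℝ := (-1) ^ (n + 1) * 4 ^ (n - 1) * (n - 1)! * (n !)
  have hθw : ∀ i ∈ range n, θ (2 * i + 1) = K * oddSqWeight n i := by
    intro i hi
    have h := hθ (i + 1) (by omega) (mem_range.1 hi)
    rw [show 2 * (i + 1) - 1 = 2 * i + 1 by omega, show n - (i + 1) = n - 1 - i by omega,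
      show n + (i + 1) - 1 = n + i by omega] at h
    rw [h]
    push_cast
    exact neg_one_pow_mul_div_eq_mul_oddSqWeight (mem_range.1 hi) _ _
  refine ⟨fun k hk hkn => ?_, ?_⟩
  · rw [sum_Icc_odd_eq_sum_range (fun m => (m : ℝ) ^ (2 * k) * θ m)]
    push_cast
    rw [sum_congr rfl fun i hi => by rw [hθw i hi, mul_left_comm], ← mul_sum,
      sum_odd_pow_mul_oddSqWeight hk (by omega), mul_zero]
  · rw [sum_Icc_odd_eq_sum_range θ, sum_congr rfl hθw, ← mul_sum, sum_oddSqWeight hn,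
      ← four_pow_mul_factorial_div_prod_odd_sq hn]
    field_simp
    have hsign : ((-1 : ℝ) ^ (n + 1)) ^ 2 = 1 := by rw [← pow_mul, pow_mul', neg_one_sq, one_pow]
    linear_combination (4 ^ (n - 1) * (n - 1)! * n ! : ℝ) * hsign
end

section
/- Heine–Szegő identity: for a Laurent series symbol f(z) = ∑_{k∈Z} f_k z^k with f(z) = exp(Ṽ(z + z^{-1})) for a polynomial Ṽ, the ℓ×ℓ Toeplitz determinant det_{1≤i,j≤ℓ}(f_{j−i}) equals the Haar-measure expectation E_{U ∈ U(ℓ)}[ exp tr Ṽ(U + U*) ] over the unitary group U(ℓ). -/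
/-!
Write `f_{n-m} = (1/2π) ∫ a_m b_n` with `a_m(φ) = e^{imφ}` and `b_n(φ) = f(e^{iφ}) e^{-inφ}`.
For such a matrix of integrals, expanding the determinant and applying Fubini gives
`∫ det (a_m(φ_k)) ∏_k b_k(φ_k)`; averaging this over the `ℓ!` permutations of the variables
turns `∏_k b_k(φ_k)` into `det (b_n(φ_k)) / ℓ!` (Andréief's identity). Both determinants are
Vandermonde determinants, in the `e^{iφ_k}` and in their conjugates, so their product is
`∏_{j<k} |e^{iφ_j} - e^{iφ_k}|² ∏_k f(e^{iφ_k})`.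
-/

open scoped ComplexConjugate
open MeasureTheory Matrix Equiv Complex

theorem Finset.prod_filter_fst_lt_snd {ι β : Type*} [Fintype ι] [LinearOrder ι]
    [LocallyFiniteOrderTop ι] [CommMonoid β] (f : ι → ι → β) :
    ∏ p ∈ Finset.univ.filter (fun p : ι × ι ↦ p.1 < p.2), f p.1 p.2
      = ∏ i, ∏ j ∈ Finset.Ioi i, f i j := by
  simp only [Finset.prod_filter, Fintype.prod_prod_type, ← Finset.filter_lt_eq_Ioi]

theorem Matrix.det_vandermonde_mul_det_vandermonde_conj {𝕜 : Type*} [RCLike 𝕜] {n : ℕ}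
    (z : Fin n → 𝕜) :
    (vandermonde z).det * (vandermonde fun k ↦ conj (z k)).det
      = ((∏ p ∈ Finset.univ.filter (fun p : Fin n × Fin n ↦ p.1 < p.2),
          ‖z p.1 - z p.2‖ ^ 2 : ℝ) : 𝕜) := by
  rw [det_vandermonde, det_vandermonde, ← Finset.prod_mul_distrib, RCLike.ofReal_prod,
    Finset.prod_filter_fst_lt_snd fun i j ↦ ((‖z i - z j‖ ^ 2 : ℝ) : 𝕜)]
  simp only [← Finset.prod_mul_distrib, ← map_sub, RCLike.mul_conj, norm_sub_rev,
    RCLike.ofReal_pow]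

theorem Complex.exp_I_mul_pow_mul_conj_pow (φ : ℝ) (i j : ℕ) :
    exp (I * φ) ^ i * conj (exp (I * φ)) ^ j = exp (-(I * ((j - i : ℤ) : ℂ) * φ)) := by
  rw [← exp_conj, ← exp_nat_mul, ← exp_nat_mul, ← exp_add]
  congr 1
  simp only [map_mul, conj_I, conj_ofReal]
  push_cast
  ring

theorem MeasureTheory.integral_comp_perm {ι α E : Type*} [Fintype ι] [MeasurableSpace α]
    [NormedAddCommGroup E] [NormedSpace ℝ E] (μ : Measure α) [SigmaFinite μ]
    (τ : Perm ι) (F : (ι → α) → E) :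
    ∫ x, F (x ∘ τ) ∂Measure.pi (fun _ ↦ μ) = ∫ x, F x ∂Measure.pi (fun _ ↦ μ) :=
  (measurePreserving_arrowCongr' (fun _ ↦ μ) (fun _ ↦ μ) τ.symm (MeasurableEquiv.refl α)
    fun _ ↦ .id μ).integral_comp' F

theorem MeasureTheory.Integrable.comp_perm {ι α E : Type*} [Fintype ι] [MeasurableSpace α]
    [NormedAddCommGroup E] {μ : Measure α} [SigmaFinite μ]
    {F : (ι → α) → E} (hF : Integrable F (Measure.pi fun _ ↦ μ)) (τ : Perm ι) :
    Integrable (fun x ↦ F (x ∘ τ)) (Measure.pi fun _ ↦ μ) :=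
  (measurePreserving_arrowCongr' (fun _ ↦ μ) (fun _ ↦ μ) τ.symm (MeasurableEquiv.refl α)
    fun _ ↦ .id μ).integrable_comp_emb (MeasurableEquiv.measurableEmbedding _) |>.mpr hF

section Andreief

variable {ι α 𝕜 : Type*} [Fintype ι] [DecidableEq ι] [RCLike 𝕜]

theorem det_mul_prod_eq_sum_perm (a b : ι → α → 𝕜) (x : ι → α) :
    (of fun i k ↦ a i (x k)).det * ∏ k, b k (x k)
      = ∑ σ : Perm ι, (Perm.sign σ : 𝕜) * ∏ i, a (σ i) (x i) * b i (x i) := by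
  simp only [det_apply', of_apply, Finset.sum_mul, mul_assoc, Finset.prod_mul_distrib]

variable [MeasurableSpace α] {μ : Measure α} [SigmaFinite μ] {a b : ι → α → 𝕜}

theorem integrable_det_mul_prod (hab : ∀ i j, Integrable (fun t ↦ a i t * b j t) μ) :
    Integrable (fun x ↦ (of fun i k ↦ a i (x k)).det * ∏ k, b k (x k))
      (Measure.pi fun _ ↦ μ) := by
  simp_rw [det_mul_prod_eq_sum_perm]
  exact integrable_finsetSum _ fun σ _ ↦ (Integrable.fintype_prod fun i ↦ hab _ _).const_mul _

theorem det_integral_mul_eq_integral_det_mul_prod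
    (hab : ∀ i j, Integrable (fun t ↦ a i t * b j t) μ) :
    (of fun i j ↦ ∫ t, a i t * b j t ∂μ).det
      = ∫ x, (of fun i k ↦ a i (x k)).det * ∏ k, b k (x k) ∂Measure.pi fun _ ↦ μ := by
  simp_rw [det_mul_prod_eq_sum_perm]
  rw [integral_finsetSum _ fun σ _ ↦ (Integrable.fintype_prod fun i ↦ hab _ _).const_mul _,
    det_apply']
  refine Finset.sum_congr rfl fun σ _ ↦ ?_
  rw [integral_const_mul, integral_fintype_prod_eq_prod (fun i t ↦ a (σ i) t * b i t)]
  rfl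

/-- **Andréief's identity**. -/
theorem factorial_mul_det_integral_mul (hab : ∀ i j, Integrable (fun t ↦ a i t * b j t) μ) :
    (Fintype.card ι).factorial * (of fun i j ↦ ∫ t, a i t * b j t ∂μ).det
      = ∫ x, (of fun i k ↦ a i (x k)).det * (of fun k j ↦ b j (x k)).det
          ∂Measure.pi fun _ ↦ μ := by
  set G : (ι → α) → 𝕜 := fun x ↦ (of fun i k ↦ a i (x k)).det * ∏ k, b k (x k)
  have hG_perm (τ : Perm ι) (x : ι → α) :
      G (x ∘ τ) = (of fun i k ↦ a i (x k)).det * ((Perm.sign τ : 𝕜) * ∏ k, b k (x (τ k))) := by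
    have : (of fun i k ↦ a i (x (τ k))) = (of fun i k ↦ a i (x k)).submatrix id τ := rfl
    simp only [G, Function.comp_apply, this, det_permute']
    ring
  calc (Fintype.card ι).factorial * (of fun i j ↦ ∫ t, a i t * b j t ∂μ).det
      = ∑ τ : Perm ι, ∫ x, G (x ∘ τ) ∂Measure.pi fun _ ↦ μ := by
        rw [Finset.sum_congr rfl fun τ _ ↦ integral_comp_perm μ τ G, Finset.sum_const,
          Finset.card_univ, Fintype.card_perm, nsmul_eq_mul,
          det_integral_mul_eq_integral_det_mul_prod hab]
    _ = ∫ x, ∑ τ : Perm ι, G (x ∘ τ) ∂Measure.pi fun _ ↦ μ :=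
        (integral_finsetSum _ fun τ _ ↦ (integrable_det_mul_prod hab).comp_perm τ).symm
    _ = _ := by
        simp only [hG_perm, ← Finset.mul_sum, det_apply', of_apply]

end Andreief

open Real in
theorem det_toeplitz_eq_integral_norm_vandermonde_sq (n : ℕ) (g : ℝ → ℂ)
    (hg : IntegrableOn g (Set.Icc 0 (2 * π))) (f : ℤ → ℂ)
    (hf : ∀ k : ℤ, f k = (1 / (2 * (π : ℂ))) *
      ∫ φ in (0 : ℝ)..(2 * π), g φ * exp (-(I * k * φ))) :
    (of fun i j : Fin n ↦ f ((j : ℤ) - (i : ℤ))).det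
      = (1 / (n.factorial : ℂ)) * (1 / (2 * (π : ℂ))) ^ n *
        ∫ φ : Fin n → ℝ in Set.univ.pi (fun _ ↦ Set.Icc 0 (2 * π)),
          ((∏ p ∈ Finset.univ.filter (fun p : Fin n × Fin n ↦ p.1 < p.2),
              ‖exp (I * φ p.1) - exp (I * φ p.2)‖ ^ 2 : ℝ) : ℂ) * ∏ j, g (φ j) := by
  set μ := volume.restrict (Set.Icc 0 (2 * π))
  set a : Fin n → ℝ → ℂ := fun i φ ↦ exp (I * φ) ^ (i : ℕ)
  set b : Fin n → ℝ → ℂ := fun j φ ↦ g φ * conj (exp (I * φ)) ^ (j : ℕ)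
  have hab (i j : Fin n) (φ : ℝ) :
      a i φ * b j φ = g φ * exp (-(I * ((j : ℤ) - (i : ℤ) : ℤ) * φ)) := by
    rw [← exp_I_mul_pow_mul_conj_pow]
    ring
  have hab_int (i j : Fin n) : Integrable (fun φ ↦ a i φ * b j φ) μ := by
    simp_rw [hab]
    exact hg.mul_continuousOn (by fun_prop) isCompact_Icc
  have htoeplitz : (of fun i j : Fin n ↦ f ((j : ℤ) - (i : ℤ)))
      = (1 / (2 * (π : ℂ))) • of fun i j ↦ ∫ φ, a i φ * b j φ ∂μ := by
    ext i j
    simp only [hf, hab, of_apply, Matrix.smul_apply, smul_eq_mul, μ,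
      intervalIntegral.integral_of_le two_pi_pos.le, integral_Icc_eq_integral_Ioc]
  have hpi : volume.restrict (Set.univ.pi fun _ : Fin n ↦ Set.Icc 0 (2 * π))
      = Measure.pi fun _ ↦ μ := by
    rw [volume_pi, Measure.restrict_pi_pi]
  have hdet (φ : Fin n → ℝ) :
      (of fun i k ↦ a i (φ k)).det * (of fun k j ↦ b j (φ k)).det
        = ((∏ p ∈ Finset.univ.filter (fun p : Fin n × Fin n ↦ p.1 < p.2),
            ‖exp (I * φ p.1) - exp (I * φ p.2)‖ ^ 2 : ℝ) : ℂ) * ∏ j, g (φ j) := by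
    have hA : (of fun i k ↦ a i (φ k)) = (vandermonde fun k ↦ exp (I * φ k))ᵀ := rfl
    have hB : (of fun k j ↦ b j (φ k))
        = of fun k j ↦ g (φ k) * vandermonde (fun k ↦ conj (exp (I * φ k))) k j := rfl
    rw [hA, hB, det_transpose, det_mul_column, mul_left_comm,
      det_vandermonde_mul_det_vandermonde_conj, mul_comm]
    rfl
  have handreief := factorial_mul_det_integral_mul hab_int
  rw [Fintype.card_fin] at handreief
  rw [htoeplitz, det_smul, Fintype.card_fin, hpi, ← integral_congr_ae (.of_forall hdet),
    ← handreief]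
  field_simp [n.factorial_ne_zero]

/-- Heine–Szegő identity: for the symbol `f(z) = exp (Ṽ(z + z⁻¹))` with `Ṽ` a
polynomial, the `ℓ×ℓ` Toeplitz determinant `det (f_{j-i})` equals the Haar expectation
`E_{U ∈ U(ℓ)} [exp tr Ṽ(U + U*)]`, written here in eigenvalue coordinates via the Weyl
integration formula:
`det (f_{j-i}) = (1/ℓ!) ∫ ∏_{j<k} |e^{iφ_j} - e^{iφ_k}|² ∏_j f(e^{iφ_j}) ∏_j dφ_j/(2π)`. -/
theorem heine_szego (ℓ : ℕ) (W : Polynomial ℂ)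
    (f : ℤ → ℂ)
    (hf : ∀ k : ℤ, f k = (1 / (2 * (Real.pi : ℂ))) *
      ∫ φ in (0 : ℝ)..(2 * Real.pi),
        Complex.exp (W.eval (Complex.exp (Complex.I * φ) + (Complex.exp (Complex.I * φ))⁻¹))
          * Complex.exp (-(Complex.I * k * φ))) :
    Matrix.det (Matrix.of fun i j : Fin ℓ => f ((j : ℤ) - (i : ℤ)))
      = (1 / (Nat.factorial ℓ : ℂ)) * (1 / (2 * (Real.pi : ℂ))) ^ ℓ *
        ∫ φ : Fin ℓ → ℝ in Set.univ.pi (fun _ => Set.Icc (0 : ℝ) (2 * Real.pi)),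
          ((∏ p ∈ Finset.univ.filter (fun p : Fin ℓ × Fin ℓ => p.1 < p.2),
              ‖Complex.exp (Complex.I * φ p.1)
                - Complex.exp (Complex.I * φ p.2)‖ ^ 2 : ℝ) : ℂ)
          * ∏ j : Fin ℓ,
              Complex.exp (W.eval (Complex.exp (Complex.I * φ j)
                + (Complex.exp (Complex.I * φ j))⁻¹)) := by
  have hsymbol : Continuous fun φ : ℝ ↦ exp (W.eval (exp (I * φ) + (exp (I * φ))⁻¹)) := by
    fun_prop (disch := exact fun _ ↦ exp_ne_zero _)
  exact det_toeplitz_eq_integral_norm_vandermonde_sq ℓ _ hsymbol.integrableOn_Icc f hf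
end
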